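/- Suppose h ∈ GL(2, O_F) is lower triangular, i.e. h_{12} = 0 with h_{11}, h_{22} ∈ O_F^× and h_{21} ∈ O_F. Suppose α(r,h,x) = u·y for some u ∈ N(4,F) and y = m·z ∈ J_f, where m = x_0 c·I_4 + x_1·σ_f with x_0, x_1 ∈ O_F, det(m) ∈ O_F^×, and z ∈ U^1. Then: r = 0; x ∈ P_F; h_{21} − x_1 ϖ ∈ P_F^2; h_{22} − (x_0 c + x_1 d) ∈ P_F (in particular x_0 c + x_1 d ∈ O_F^×); and h_{11}(x_0 c + x_1 d) − c(x_0^2 c + x_0 x_1 d − x_1^2) ∈ P_F. -/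

import Mathlib

open Matrix Polynomial IsLocalRing

/-- Membership in the fractional ideal `P_F^n = ϖ^n · O_F` inside the fraction field. -/
def inPpow {O F : Type*} [CommRing O] [Field F] [Algebra O F]
    (ϖ : O) (n : ℤ) (x : F) : Prop :=
  ∃ t : O, x = (algebraMap O F ϖ) ^ n * algebraMap O F t

/-- Upper triangular unipotent 4×4 matrices: the group `N(4,F)`. -/
def IsUnipUpper {F : Type*} [Field F] (u : Matrix (Fin 4) (Fin 4) F) : Prop :=
  (∀ i, u i i = 1) ∧ ∀ i j : Fin 4, j < i → u i j = 0

/-- The matrix `α(r,h,x)` of the paper. -/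
noncomputable def alphaMat {O F : Type*} [CommRing O] [Field F] [Algebra O F]
    (ϖ : O) (r : ℤ) (h : Matrix (Fin 2) (Fin 2) O) (x : F) :
    Matrix (Fin 4) (Fin 4) F :=
  !![algebraMap O F (h 0 0) * (algebraMap O F ϖ) ^ r, 0,
       algebraMap O F (h 0 1) * (algebraMap O F ϖ) ^ r, 0;
     0, algebraMap O F (h 0 0) * (algebraMap O F ϖ) ^ r, 0,
       algebraMap O F (h 0 1) * (algebraMap O F ϖ) ^ r;
     algebraMap O F (h 1 0), algebraMap O F (h 0 0) * x * (algebraMap O F ϖ) ^ r,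
       algebraMap O F (h 1 1), algebraMap O F (h 0 1) * x * (algebraMap O F ϖ) ^ r;
     0, algebraMap O F (h 1 0), 0, algebraMap O F (h 1 1)]

/-- The matrix `β_f`. -/
noncomputable def betaf (F : Type*) [Field F] {O : Type*} [CommRing O] [Algebra O F]
    (c d ϖ : O) : Matrix (Fin 4) (Fin 4) F :=
  !![0, 0, 0, algebraMap O F c * (algebraMap O F ϖ) ^ (-2 : ℤ);
     1, 0, 0, 0;
     0, 1, 0, algebraMap O F d * (algebraMap O F ϖ) ^ (-1 : ℤ);
     0, 0, 1, 0]

/-- The matrix `σ_f = ϖ · β_f²`. -/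
noncomputable def sigmaf (F : Type*) [Field F] {O : Type*} [CommRing O] [Algebra O F]
    (c d ϖ : O) : Matrix (Fin 4) (Fin 4) F :=
  algebraMap O F ϖ • (betaf F c d ϖ) ^ 2

/-- The exponent matrix of the hereditary order: entries of `𝔓_4` lie in `P_F^{e(i,j)}`. -/
def eMatf : Matrix (Fin 4) (Fin 4) ℤ :=
  !![1, 0, 0, -1; 1, 1, 0, 0; 2, 1, 1, 0; 2, 2, 1, 1]

/-- Membership in `U^1 = I_4 + 𝔓_4`. -/
def inU1f {O F : Type*} [CommRing O] [Field F] [Algebra O F]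
    (ϖ : O) (z : Matrix (Fin 4) (Fin 4) F) : Prop :=
  ∃ p : Matrix (Fin 4) (Fin 4) F,
    (∀ i j : Fin 4, inPpow ϖ (eMatf i j) (p i j)) ∧ z = 1 + p

/-- The matrix `x₀c·I₄ + x₁·σ_f`. -/
noncomputable def mMatf (F : Type*) [Field F] {O : Type*} [CommRing O] [Algebra O F]
    (c d ϖ x0 x1 : O) : Matrix (Fin 4) (Fin 4) F :=
  algebraMap O F (x0 * c) • (1 : Matrix (Fin 4) (Fin 4) F) +
    algebraMap O F x1 • sigmaf F c d ϖ

/-- Membership in `J_f`. -/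
def inJf (F : Type*) [Field F] {O : Type*} [CommRing O] [Algebra O F]
    (c d ϖ : O) (y : Matrix (Fin 4) (Fin 4) F) : Prop :=
  ∃ (x0 x1 : O) (z : Matrix (Fin 4) (Fin 4) F),
    inU1f ϖ z ∧
    (∃ w : Oˣ, algebraMap O F (w : O) = (mMatf F c d ϖ x0 x1).det) ∧
    y = mMatf F c d ϖ x0 x1 * z

/-!
Compare rows 1, 2, 3 (counted from 0) of `alphaMat = u * y` with `y = mMatf * (1 + p)`. As `u` is
unipotent upper triangular, row 3 of `alphaMat` is row 3 of `y`; this gives the congruences for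
`h 1 0` and `h 1 1`, and the vanishing entries `(2,3)` and `(1,2)` of `alphaMat` then make `u 2 3`
and `u 1 2` integral. The minor of `alphaMat` on rows and columns `{1, 3}` is `h 0 0 * ϖ^r * h 1 1`;
computed through `u * y` it is `≡ c (x₀²c + x₀x₁d - x₁²) mod P`, a unit since
`det mMatf = (c (x₀²c + x₀x₁d - x₁²))²`. Comparing valuations forces `r = 0` and gives the last
congruence, and entry `(2,1)` then puts `x` in `P`.
-/

section FractionalIdeal
variable {O F : Type*} [CommRing O] [Field F] [Algebra O F] {ϖ : O} {m n k : ℤ} {a b : F}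

theorem inPpow.add (ha : inPpow ϖ n a) (hb : inPpow ϖ n b) : inPpow ϖ n (a + b) := by
  obtain ⟨s, rfl⟩ := ha
  obtain ⟨t, rfl⟩ := hb
  exact ⟨s + t, by rw [map_add, mul_add]⟩

theorem inPpow.neg (ha : inPpow ϖ n a) : inPpow ϖ n (-a) := by
  obtain ⟨s, rfl⟩ := ha
  exact ⟨-s, by rw [map_neg, mul_neg]⟩

theorem inPpow.sub (ha : inPpow ϖ n a) (hb : inPpow ϖ n b) : inPpow ϖ n (a - b) := by
  simpa only [sub_eq_add_neg] using ha.add hb.neg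

theorem inPpow_algebraMap (t : O) : inPpow ϖ 0 (algebraMap O F t) :=
  ⟨t, by rw [zpow_zero, one_mul]⟩

theorem inPpow_one_uniformizer_mul (t : O) :
    inPpow ϖ 1 (algebraMap O F ϖ * algebraMap O F t) :=
  ⟨t, by rw [zpow_one]⟩

theorem inPpow_zpow (n : ℤ) : inPpow ϖ n (algebraMap O F ϖ ^ n) :=
  ⟨1, by rw [map_one, mul_one]⟩

theorem inPpow.mono (hϖ : algebraMap O F ϖ ≠ 0) (ha : inPpow ϖ n a) (hmn : m ≤ n) :
    inPpow ϖ m a := by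
  obtain ⟨s, rfl⟩ := ha
  obtain ⟨l, hl⟩ := Int.eq_ofNat_of_zero_le (sub_nonneg.mpr hmn)
  refine ⟨ϖ ^ l * s, ?_⟩
  rw [map_mul, map_pow, ← zpow_natCast, ← hl, ← mul_assoc, ← zpow_add₀ hϖ, add_sub_cancel]

theorem inPpow.mul (hϖ : algebraMap O F ϖ ≠ 0) (ha : inPpow ϖ m a) (hb : inPpow ϖ n b)
    (hk : k ≤ m + n) : inPpow ϖ k (a * b) := by
  obtain ⟨s, rfl⟩ := ha
  obtain ⟨t, rfl⟩ := hb
  refine inPpow.mono hϖ ⟨s * t, ?_⟩ hk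
  rw [map_mul, zpow_add₀ hϖ]
  ring

theorem inPpow.of_mul_isUnit {w : O} (h : inPpow ϖ n (a * algebraMap O F w)) (hw : IsUnit w) :
    inPpow ϖ n a := by
  obtain ⟨s, hs⟩ := h
  obtain ⟨v, hv⟩ := hw.exists_right_inv
  refine ⟨s * v, ?_⟩
  rw [map_mul, ← mul_assoc, ← hs, mul_assoc, ← map_mul, hv, map_one, mul_one]

theorem inPpow_natCast_algebraMap_iff (hinj : Function.Injective (algebraMap O F)) {l : ℕ}
    {s : O} : inPpow ϖ l (algebraMap O F s) ↔ ϖ ^ l ∣ s := by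
  simp only [inPpow, zpow_natCast, ← map_pow, ← map_mul, hinj.eq_iff, Dvd.dvd]

theorem not_inPpow_one_algebraMap_of_isUnit (hϖ : Irreducible ϖ)
    (hinj : Function.Injective (algebraMap O F)) {v : O} (hv : IsUnit v) :
    ¬ inPpow ϖ 1 (algebraMap O F v) := fun h =>
  hϖ.not_isUnit <| isUnit_of_dvd_unit
    (by simpa using (inPpow_natCast_algebraMap_iff hinj (l := 1)).mp h) hv

theorem eq_zero_of_inPpow_one_mul_zpow_sub (hϖ : Irreducible ϖ)
    (hinj : Function.Injective (algebraMap O F)) {w v : O} (hw : IsUnit w) (hv : IsUnit v)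
    {r : ℤ} (h : inPpow ϖ 1 (algebraMap O F w * algebraMap O F ϖ ^ r - algebraMap O F v)) :
    r = 0 := by
  have hϖ0 : algebraMap O F ϖ ≠ 0 := (map_ne_zero_iff _ hinj).mpr hϖ.ne_zero
  rcases lt_trichotomy r 0 with hr | hr | hr
  · refine absurd ?_ (not_inPpow_one_algebraMap_of_isUnit hϖ hinj hw)
    have hvr : inPpow ϖ 1 (algebraMap O F v * algebraMap O F ϖ ^ (-r)) :=
      (inPpow_algebraMap v).mul hϖ0 (inPpow_zpow _) (by omega)
    convert (h.mul hϖ0 (inPpow_zpow (-r)) (by omega)).add hvr using 1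
    rw [sub_mul, mul_assoc, ← zpow_add₀ hϖ0, add_neg_cancel, zpow_zero, mul_one, sub_add_cancel]
  · exact hr
  · refine absurd ?_ (not_inPpow_one_algebraMap_of_isUnit hϖ hinj hv)
    simpa using ((inPpow_algebraMap w).mul hϖ0 (inPpow_zpow r) (by omega)).sub h

end FractionalIdeal

section DiscreteValuationRing
variable {O F : Type*} [CommRing O] [IsDomain O] [IsDiscreteValuationRing O] [Field F]
  [Algebra O F] {ϖ : O}

theorem inPpow_algebraMap_iff_mem_maximalIdeal_pow (hϖ : Irreducible ϖ)
    (hinj : Function.Injective (algebraMap O F)) {l : ℕ} {s : O} :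
    inPpow ϖ l (algebraMap O F s) ↔ s ∈ maximalIdeal O ^ l := by
  rw [inPpow_natCast_algebraMap_iff hinj,
    (IsDiscreteValuationRing.irreducible_iff_uniformizer ϖ).mp hϖ, Ideal.span_singleton_pow,
    Ideal.mem_span_singleton]

theorem inPpow_one_algebraMap_iff_mem_maximalIdeal (hϖ : Irreducible ϖ)
    (hinj : Function.Injective (algebraMap O F)) {s : O} :
    inPpow ϖ 1 (algebraMap O F s) ↔ s ∈ maximalIdeal O := by
  simpa using inPpow_algebraMap_iff_mem_maximalIdeal_pow hϖ hinj (l := 1)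

end DiscreteValuationRing

section ExplicitMatrices
variable {O F : Type*} [CommRing O] [Field F] [Algebra O F]

theorem sigmaf_eq (c d ϖ : O) (hϖ : algebraMap O F ϖ ≠ 0) :
    sigmaf F c d ϖ =
      !![0, 0, (algebraMap O F ϖ)⁻¹ * algebraMap O F c, 0;
         0, 0, 0, (algebraMap O F ϖ)⁻¹ * algebraMap O F c;
         algebraMap O F ϖ, 0, algebraMap O F d, 0;
         0, algebraMap O F ϖ, 0, algebraMap O F d] := by
  ext i j
  fin_cases i <;> fin_cases j <;> simp [sigmaf, betaf, sq, _root_.zpow_neg] <;> field_simp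

theorem mMatf_eq (c d ϖ x0 x1 : O) (hϖ : algebraMap O F ϖ ≠ 0) :
    mMatf F c d ϖ x0 x1 =
      !![algebraMap O F (x0 * c), 0, (algebraMap O F ϖ)⁻¹ * algebraMap O F (x1 * c), 0;
         0, algebraMap O F (x0 * c), 0, (algebraMap O F ϖ)⁻¹ * algebraMap O F (x1 * c);
         algebraMap O F ϖ * algebraMap O F x1, 0, algebraMap O F (x0 * c + x1 * d), 0;
         0, algebraMap O F ϖ * algebraMap O F x1, 0, algebraMap O F (x0 * c + x1 * d)] := by
  ext i j
  fin_cases i <;> fin_cases j <;> simp [mMatf, sigmaf_eq c d ϖ hϖ] <;>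
    simp only [Algebra.smul_def] <;> ring

theorem det_mMatf (c d ϖ x0 x1 : O) (hϖ : algebraMap O F ϖ ≠ 0) :
    (mMatf F c d ϖ x0 x1).det =
      algebraMap O F ((c * (x0 ^ 2 * c + x0 * x1 * d - x1 ^ 2)) ^ 2) := by
  rw [mMatf_eq c d ϖ x0 x1 hϖ, Matrix.det_succ_row_zero]
  simp [Fin.sum_univ_succ, Fin.succAbove, Matrix.det_fin_three]
  field_simp
  ring

theorem isUnit_of_det_mMatf {c d ϖ x0 x1 : O} (hinj : Function.Injective (algebraMap O F))
    (hϖ : algebraMap O F ϖ ≠ 0)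
    (hm : ∃ w : Oˣ, algebraMap O F (w : O) = (mMatf F c d ϖ x0 x1).det) :
    IsUnit (c * (x0 ^ 2 * c + x0 * x1 * d - x1 ^ 2)) := by
  obtain ⟨w, hw⟩ := hm
  have hsq : (c * (x0 ^ 2 * c + x0 * x1 * d - x1 ^ 2)) ^ 2 = w :=
    hinj (by rw [← det_mMatf c d ϖ x0 x1 hϖ, hw])
  exact (isUnit_pow_iff two_ne_zero).mp (hsq ▸ w.isUnit)

theorem mMatf_mul_apply_one (c d ϖ x0 x1 : O) (hϖ : algebraMap O F ϖ ≠ 0)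
    (z : Matrix (Fin 4) (Fin 4) F) (j : Fin 4) :
    (mMatf F c d ϖ x0 x1 * z) 1 j =
      algebraMap O F (x0 * c) * z 1 j +
        (algebraMap O F ϖ)⁻¹ * algebraMap O F (x1 * c) * z 3 j := by
  simp [mMatf_eq c d ϖ x0 x1 hϖ, Matrix.mul_apply, Fin.sum_univ_four]

theorem mMatf_mul_apply_two (c d ϖ x0 x1 : O) (hϖ : algebraMap O F ϖ ≠ 0)
    (z : Matrix (Fin 4) (Fin 4) F) (j : Fin 4) :
    (mMatf F c d ϖ x0 x1 * z) 2 j =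
      algebraMap O F ϖ * algebraMap O F x1 * z 0 j +
        algebraMap O F (x0 * c + x1 * d) * z 2 j := by
  simp [mMatf_eq c d ϖ x0 x1 hϖ, Matrix.mul_apply, Fin.sum_univ_four]

theorem mMatf_mul_apply_three (c d ϖ x0 x1 : O) (hϖ : algebraMap O F ϖ ≠ 0)
    (z : Matrix (Fin 4) (Fin 4) F) (j : Fin 4) :
    (mMatf F c d ϖ x0 x1 * z) 3 j =
      algebraMap O F ϖ * algebraMap O F x1 * z 1 j +
        algebraMap O F (x0 * c + x1 * d) * z 3 j := by
  simp [mMatf_eq c d ϖ x0 x1 hϖ, Matrix.mul_apply, Fin.sum_univ_four]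

end ExplicitMatrices

section EntriesOfJfElement
variable {O F : Type*} [CommRing O] [Field F] [Algebra O F] {c d ϖ x0 x1 : O}
  {p : Matrix (Fin 4) (Fin 4) F}

theorem inPpow_mMatf_mul_one_add_apply_three_one_sub (hϖ : algebraMap O F ϖ ≠ 0)
    (hp : ∀ i j, inPpow ϖ (eMatf i j) (p i j)) :
    inPpow ϖ 2
      ((mMatf F c d ϖ x0 x1 * (1 + p)) 3 1 - algebraMap O F ϖ * algebraMap O F x1) := by
  have e : (mMatf F c d ϖ x0 x1 * (1 + p)) 3 1 - algebraMap O F ϖ * algebraMap O F x1 =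
      algebraMap O F ϖ * algebraMap O F x1 * p 1 1 + algebraMap O F (x0 * c + x1 * d) * p 3 1 := by
    simp [mMatf_mul_apply_three c d ϖ x0 x1 hϖ]; ring
  rw [e]
  exact ((inPpow_one_uniformizer_mul x1).mul hϖ (hp 1 1) (by decide)).add
    ((inPpow_algebraMap _).mul hϖ (hp 3 1) (by decide))

theorem inPpow_mMatf_mul_one_add_apply_three_one (hϖ : algebraMap O F ϖ ≠ 0)
    (hp : ∀ i j, inPpow ϖ (eMatf i j) (p i j)) :
    inPpow ϖ 1 ((mMatf F c d ϖ x0 x1 * (1 + p)) 3 1) := by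
  rw [← sub_add_cancel ((mMatf F c d ϖ x0 x1 * (1 + p)) 3 1)
    (algebraMap O F ϖ * algebraMap O F x1)]
  exact ((inPpow_mMatf_mul_one_add_apply_three_one_sub hϖ hp).mono hϖ (by norm_num)).add
    (inPpow_one_uniformizer_mul x1)

theorem inPpow_mMatf_mul_one_add_apply_three_three_sub (hϖ : algebraMap O F ϖ ≠ 0)
    (hp : ∀ i j, inPpow ϖ (eMatf i j) (p i j)) :
    inPpow ϖ 1 ((mMatf F c d ϖ x0 x1 * (1 + p)) 3 3 - algebraMap O F (x0 * c + x1 * d)) := by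
  have e : (mMatf F c d ϖ x0 x1 * (1 + p)) 3 3 - algebraMap O F (x0 * c + x1 * d) =
      algebraMap O F ϖ * algebraMap O F x1 * p 1 3 + algebraMap O F (x0 * c + x1 * d) * p 3 3 := by
    simp [mMatf_mul_apply_three c d ϖ x0 x1 hϖ]; ring
  rw [e]
  exact ((inPpow_one_uniformizer_mul x1).mul hϖ (hp 1 3) (by decide)).add
    ((inPpow_algebraMap _).mul hϖ (hp 3 3) (by decide))

theorem inPpow_mMatf_mul_one_add_apply_three_three (hϖ : algebraMap O F ϖ ≠ 0)
    (hp : ∀ i j, inPpow ϖ (eMatf i j) (p i j)) :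
    inPpow ϖ 0 ((mMatf F c d ϖ x0 x1 * (1 + p)) 3 3) := by
  rw [← sub_add_cancel ((mMatf F c d ϖ x0 x1 * (1 + p)) 3 3)
    (algebraMap O F (x0 * c + x1 * d))]
  exact ((inPpow_mMatf_mul_one_add_apply_three_three_sub hϖ hp).mono hϖ (by norm_num)).add
    (inPpow_algebraMap _)

theorem inPpow_mMatf_mul_one_add_apply_two_one (hϖ : algebraMap O F ϖ ≠ 0)
    (hp : ∀ i j, inPpow ϖ (eMatf i j) (p i j)) :
    inPpow ϖ 1 ((mMatf F c d ϖ x0 x1 * (1 + p)) 2 1) := by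
  simpa [mMatf_mul_apply_two c d ϖ x0 x1 hϖ] using
    (((inPpow_one_uniformizer_mul x1).mul hϖ (hp 0 1) (by decide)).add
      ((inPpow_algebraMap (x0 * c + x1 * d)).mul hϖ (hp 2 1) (by decide)) : inPpow ϖ 1 _)

theorem inPpow_mMatf_mul_one_add_apply_two_three (hϖ : algebraMap O F ϖ ≠ 0)
    (hp : ∀ i j, inPpow ϖ (eMatf i j) (p i j)) :
    inPpow ϖ 0 ((mMatf F c d ϖ x0 x1 * (1 + p)) 2 3) := by
  simpa [mMatf_mul_apply_two c d ϖ x0 x1 hϖ] using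
    (((inPpow_one_uniformizer_mul x1).mul hϖ (hp 0 3) (by decide)).add
      ((inPpow_algebraMap (x0 * c + x1 * d)).mul hϖ (hp 2 3) (by decide)) : inPpow ϖ 0 _)

theorem inPpow_mMatf_mul_one_add_apply_one_two (hϖ : algebraMap O F ϖ ≠ 0)
    (hp : ∀ i j, inPpow ϖ (eMatf i j) (p i j)) :
    inPpow ϖ 0 ((mMatf F c d ϖ x0 x1 * (1 + p)) 1 2) := by
  have hb : inPpow ϖ (-1) ((algebraMap O F ϖ)⁻¹ * algebraMap O F (x1 * c)) :=
    ⟨x1 * c, by rw [_root_.zpow_neg_one]⟩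
  simpa [mMatf_mul_apply_one c d ϖ x0 x1 hϖ] using
    (((inPpow_algebraMap (x0 * c)).mul hϖ (hp 1 2) (by decide)).add
      (hb.mul hϖ (hp 3 2) (by decide)) : inPpow ϖ 0 _)

/-- Rows 1 and 3 of `mMatf` are supported on columns 1 and 3, with 2×2 determinant
`c (x₀²c + x₀x₁d - x₁²)`, so by Cauchy–Binet this minor is that determinant times the same minor
of `1 + p`, which is `≡ 1 mod P`. -/
theorem inPpow_mMatf_mul_one_add_minor_sub (hϖ : algebraMap O F ϖ ≠ 0)
    (hp : ∀ i j, inPpow ϖ (eMatf i j) (p i j)) :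
    let M := mMatf F c d ϖ x0 x1 * (1 + p)
    inPpow ϖ 1 (M 1 1 * M 3 3 - M 1 3 * M 3 1 -
      algebraMap O F (c * (x0 ^ 2 * c + x0 * x1 * d - x1 ^ 2))) := by
  intro M
  have e : M 1 1 * M 3 3 - M 1 3 * M 3 1 -
        algebraMap O F (c * (x0 ^ 2 * c + x0 * x1 * d - x1 ^ 2)) =
      algebraMap O F (c * (x0 ^ 2 * c + x0 * x1 * d - x1 ^ 2)) *
        (p 1 1 + p 3 3 + p 1 1 * p 3 3 - p 1 3 * p 3 1) := by
    simp only [M, mMatf_mul_apply_one c d ϖ x0 x1 hϖ, mMatf_mul_apply_three c d ϖ x0 x1 hϖ,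
      Matrix.add_apply, one_apply_eq, one_apply_ne (by decide : (1 : Fin 4) ≠ 3),
      one_apply_ne (by decide : (3 : Fin 4) ≠ 1), zero_add, map_mul, map_add, map_sub, map_pow]
    field_simp
    ring
  rw [e]
  refine (inPpow_algebraMap _).mul hϖ ((((hp 1 1).add (hp 3 3)).add ?_).sub ?_) (by decide)
  · exact (hp 1 1).mul hϖ (hp 3 3) (by decide)
  · exact (hp 1 3).mul hϖ (hp 3 1) (by decide)

end EntriesOfJfElement

namespace IsUnipUpper
variable {F : Type*} [Field F] {u : Matrix (Fin 4) (Fin 4) F}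

theorem mul_apply_three (hu : IsUnipUpper u) (M : Matrix (Fin 4) (Fin 4) F) (j : Fin 4) :
    (u * M) 3 j = M 3 j := by
  simp [Matrix.mul_apply, Fin.sum_univ_four, hu.1, hu.2 3 0, hu.2 3 1, hu.2 3 2]

theorem mul_apply_two (hu : IsUnipUpper u) (M : Matrix (Fin 4) (Fin 4) F) (j : Fin 4) :
    (u * M) 2 j = M 2 j + u 2 3 * M 3 j := by
  simp [Matrix.mul_apply, Fin.sum_univ_four, hu.1, hu.2 2 0, hu.2 2 1]

theorem mul_apply_one (hu : IsUnipUpper u) (M : Matrix (Fin 4) (Fin 4) F) (j : Fin 4) :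
    (u * M) 1 j = M 1 j + u 1 2 * M 2 j + u 1 3 * M 3 j := by
  simp [Matrix.mul_apply, Fin.sum_univ_four, hu.1, hu.2 1 0, add_assoc]

end IsUnipUpper

section Unipotent
variable {O F : Type*} [CommRing O] [Field F] [Algebra O F] {ϖ : O} {r : ℤ}
  {h : Matrix (Fin 2) (Fin 2) O} {x : F} {u M : Matrix (Fin 4) (Fin 4) F}

theorem alphaMat_eq_unipUpper_mul_row_three (hu : IsUnipUpper u) (h12 : h 0 1 = 0)
    (heq : alphaMat ϖ r h x = u * M) :
    M 3 1 = algebraMap O F (h 1 0) ∧ M 3 2 = 0 ∧ M 3 3 = algebraMap O F (h 1 1) := by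
  refine ⟨?_, ?_, ?_⟩ <;> [have e := congr_fun₂ heq 3 1; have e := congr_fun₂ heq 3 2;
    have e := congr_fun₂ heq 3 3] <;> simpa [alphaMat, hu.mul_apply_three, h12] using e.symm

theorem alphaMat_eq_unipUpper_mul_row_two (hu : IsUnipUpper u) (h12 : h 0 1 = 0)
    (heq : alphaMat ϖ r h x = u * M) :
    u 2 3 * algebraMap O F (h 1 1) = -M 2 3 ∧
      algebraMap O F (h 0 0) * x * algebraMap O F ϖ ^ r = M 2 1 + u 2 3 * M 3 1 := by
  obtain ⟨-, -, e33⟩ := alphaMat_eq_unipUpper_mul_row_three hu h12 heq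
  have e23 := congr_fun₂ heq 2 3
  have e21 := congr_fun₂ heq 2 1
  simp only [alphaMat, hu.mul_apply_two, h12, map_zero, zero_mul, of_apply, cons_val',
    cons_val, cons_val_fin_one, cons_val_one, cons_val_zero] at e23 e21
  constructor
  · linear_combination -e23 - u 2 3 * e33
  · linear_combination e21

theorem alphaMat_eq_unipUpper_mul_row_one (hu : IsUnipUpper u) (h12 : h 0 1 = 0)
    (heq : alphaMat ϖ r h x = u * M) :
    u 1 2 * algebraMap O F (h 1 1) = -M 1 2 ∧
      algebraMap O F (h 0 0) * algebraMap O F ϖ ^ r * algebraMap O F (h 1 1) =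
        (M 1 1 * M 3 3 - M 1 3 * M 3 1) + u 1 2 * (M 2 1 * M 3 3 - M 2 3 * M 3 1) := by
  obtain ⟨e31, e32, e33⟩ := alphaMat_eq_unipUpper_mul_row_three hu h12 heq
  have e22 := congr_fun₂ heq 2 2
  have e11 := congr_fun₂ heq 1 1
  have e12 := congr_fun₂ heq 1 2
  have e13 := congr_fun₂ heq 1 3
  simp only [alphaMat, hu.mul_apply_one, hu.mul_apply_two, h12, map_zero, zero_mul, of_apply,
    cons_val', cons_val, cons_val_fin_one, cons_val_one, cons_val_zero] at e22 e11 e12 e13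
  constructor
  · linear_combination -e12 + u 1 2 * e22 + (u 1 2 * u 2 3 - u 1 3) * e32
  · linear_combination
      M 3 3 * e11 - M 3 1 * e13 - algebraMap O F (h 0 0) * algebraMap O F ϖ ^ r * e33

end Unipotent

section Decomposition
variable {O F : Type*} [CommRing O] [Field F] [Algebra O F] {c d ϖ x0 x1 : O} {r : ℤ}
  {h : Matrix (Fin 2) (Fin 2) O} {x : F} {u p : Matrix (Fin 4) (Fin 4) F}

theorem inPpow_one_mul_zpow_sub_of_alphaMat_eq (hϖ : algebraMap O F ϖ ≠ 0)
    (hp : ∀ i j, inPpow ϖ (eMatf i j) (p i j)) (hu : IsUnipUpper u) (h12 : h 0 1 = 0)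
    (h22 : IsUnit (h 1 1)) (heq : alphaMat ϖ r h x = u * (mMatf F c d ϖ x0 x1 * (1 + p))) :
    inPpow ϖ 1 (algebraMap O F (h 0 0 * h 1 1) * algebraMap O F ϖ ^ r -
      algebraMap O F (c * (x0 ^ 2 * c + x0 * x1 * d - x1 ^ 2))) := by
  set M := mMatf F c d ϖ x0 x1 * (1 + p)
  obtain ⟨e12, e11⟩ := alphaMat_eq_unipUpper_mul_row_one hu h12 heq
  have hu12 : inPpow ϖ 0 (u 1 2) :=
    (e12 ▸ (inPpow_mMatf_mul_one_add_apply_one_two hϖ hp).neg).of_mul_isUnit h22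
  have hminor : inPpow ϖ 1 (M 2 1 * M 3 3 - M 2 3 * M 3 1) :=
    ((inPpow_mMatf_mul_one_add_apply_two_one hϖ hp).mul hϖ
      (inPpow_mMatf_mul_one_add_apply_three_three hϖ hp) le_rfl).sub
    ((inPpow_mMatf_mul_one_add_apply_two_three hϖ hp).mul hϖ
      (inPpow_mMatf_mul_one_add_apply_three_one hϖ hp) le_rfl)
  rw [map_mul, mul_right_comm, e11, add_sub_right_comm]
  exact (inPpow_mMatf_mul_one_add_minor_sub hϖ hp).add (hu12.mul hϖ hminor le_rfl)

theorem inPpow_one_mul_mul_zpow_of_alphaMat_eq (hϖ : algebraMap O F ϖ ≠ 0)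
    (hp : ∀ i j, inPpow ϖ (eMatf i j) (p i j)) (hu : IsUnipUpper u) (h12 : h 0 1 = 0)
    (h22 : IsUnit (h 1 1)) (heq : alphaMat ϖ r h x = u * (mMatf F c d ϖ x0 x1 * (1 + p))) :
    inPpow ϖ 1 (algebraMap O F (h 0 0) * x * algebraMap O F ϖ ^ r) := by
  obtain ⟨e23, e21⟩ := alphaMat_eq_unipUpper_mul_row_two hu h12 heq
  have hu23 : inPpow ϖ 0 (u 2 3) :=
    (e23 ▸ (inPpow_mMatf_mul_one_add_apply_two_three hϖ hp).neg).of_mul_isUnit h22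
  rw [e21]
  exact (inPpow_mMatf_mul_one_add_apply_two_one hϖ hp).add
    (hu23.mul hϖ (inPpow_mMatf_mul_one_add_apply_three_one hϖ hp) le_rfl)

end Decomposition

theorem middle_T0_decomposition_general
    {O : Type*} [CommRing O] [IsDomain O] [IsDiscreteValuationRing O]
    {F : Type*} [Field F] [Algebra O F] [IsFractionRing O F]
    (ϖ : O) (hϖ : Irreducible ϖ) (c d : O)
    (r : ℤ) (h : Matrix (Fin 2) (Fin 2) O)
    (h12 : h 0 1 = 0) (h11 : IsUnit (h 0 0)) (h22 : IsUnit (h 1 1))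
    (x : F) (u : Matrix (Fin 4) (Fin 4) F) (hu : IsUnipUpper u)
    (x0 x1 : O) (z : Matrix (Fin 4) (Fin 4) F) (hz : inU1f ϖ z)
    (hm : ∃ w : Oˣ, algebraMap O F (w : O) = (mMatf F c d ϖ x0 x1).det)
    (heq : alphaMat ϖ r h x = u * (mMatf F c d ϖ x0 x1 * z)) :
    r = 0 ∧
    inPpow ϖ 1 x ∧
    h 1 0 - x1 * ϖ ∈ maximalIdeal O ^ 2 ∧
    h 1 1 - (x0 * c + x1 * d) ∈ maximalIdeal O ∧
    IsUnit (x0 * c + x1 * d) ∧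
    h 0 0 * (x0 * c + x1 * d) - c * (x0 ^ 2 * c + x0 * x1 * d - x1 ^ 2) ∈ maximalIdeal O := by
  have hinj : Function.Injective (algebraMap O F) := IsFractionRing.injective O F
  have hϖ0 : algebraMap O F ϖ ≠ 0 := (map_ne_zero_iff _ hinj).mpr hϖ.ne_zero
  obtain ⟨p, hp, rfl⟩ := hz
  obtain ⟨e31, -, e33⟩ := alphaMat_eq_unipUpper_mul_row_three hu h12 heq
  have hh10 : h 1 0 - x1 * ϖ ∈ maximalIdeal O ^ 2 := by
    rw [← inPpow_algebraMap_iff_mem_maximalIdeal_pow hϖ hinj]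
    simpa [← e31, mul_comm] using inPpow_mMatf_mul_one_add_apply_three_one_sub hϖ0 hp
  have hh11 : h 1 1 - (x0 * c + x1 * d) ∈ maximalIdeal O := by
    rw [← inPpow_one_algebraMap_iff_mem_maximalIdeal hϖ hinj]
    simpa [← e33] using inPpow_mMatf_mul_one_add_apply_three_three_sub hϖ0 hp
  have hkey := inPpow_one_mul_zpow_sub_of_alphaMat_eq hϖ0 hp hu h12 h22 heq
  obtain rfl : r = 0 := eq_zero_of_inPpow_one_mul_zpow_sub hϖ hinj (h11.mul h22)
    (isUnit_of_det_mMatf hinj hϖ0 hm) hkey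
  have hh00h11 : h 0 0 * h 1 1 - c * (x0 ^ 2 * c + x0 * x1 * d - x1 ^ 2) ∈ maximalIdeal O := by
    rw [← inPpow_one_algebraMap_iff_mem_maximalIdeal hϖ hinj]
    simpa using hkey
  refine ⟨rfl, ?_, hh10, hh11, ?_, ?_⟩
  · have hx := inPpow_one_mul_mul_zpow_of_alphaMat_eq hϖ0 hp hu h12 h22 heq
    rw [zpow_zero, mul_one, mul_comm] at hx
    exact hx.of_mul_isUnit h11
  · refine (isUnit_or_isUnit_of_isUnit_add (b := h 1 1 - (x0 * c + x1 * d)) ?_).resolve_right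
      fun hunit => notMem_maximalIdeal.mpr hunit hh11
    rwa [add_sub_cancel]
  · convert Ideal.sub_mem _ hh00h11 (Ideal.mul_mem_left _ (h 0 0) hh11) using 1
    ring

theorem middle_T0_decomposition
    {O : Type*} [CommRing O] [IsDomain O] [IsDiscreteValuationRing O] [CharZero O]
    {F : Type*} [Field F] [Algebra O F] [IsFractionRing O F]
    (ϖ : O) (hϖ : Irreducible ϖ) (c d : O)
    (hf : Irreducible ((X ^ 2 - C d * X - C c : Polynomial O).map (residue O)))
    (r : ℤ) (h : Matrix (Fin 2) (Fin 2) O)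
    (h12 : h 0 1 = 0) (h11 : IsUnit (h 0 0)) (h22 : IsUnit (h 1 1))
    (x : F) (u : Matrix (Fin 4) (Fin 4) F) (hu : IsUnipUpper u)
    (x0 x1 : O) (z : Matrix (Fin 4) (Fin 4) F) (hz : inU1f ϖ z)
    (hm : ∃ w : Oˣ, algebraMap O F (w : O) = (mMatf F c d ϖ x0 x1).det)
    (heq : alphaMat ϖ r h x = u * (mMatf F c d ϖ x0 x1 * z)) :
    r = 0 ∧
    inPpow ϖ 1 x ∧
    h 1 0 - x1 * ϖ ∈ maximalIdeal O ^ 2 ∧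
    h 1 1 - (x0 * c + x1 * d) ∈ maximalIdeal O ∧
    IsUnit (x0 * c + x1 * d) ∧
    h 0 0 * (x0 * c + x1 * d) - c * (x0 ^ 2 * c + x0 * x1 * d - x1 ^ 2) ∈ maximalIdeal O :=
  middle_T0_decomposition_general ϖ hϖ c d r h h12 h11 h22 x u hu x0 x1 z hz hm heq
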